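/- Let Θ̃ ⊂ ℝ^d be compact and τ > 0. Let f_* be a Gaussian location mixture density whose mixing measure μ_* satisfies ∫ exp(3‖θ‖²/2) dμ_*(θ) < ∞ (in particular if μ_* is compactly supported). Then there exists a finite constant C, depending only on Θ̃, d, τ and μ_*, such that for every Gaussian location mixture density f whose mixing measure assigns mass at least τ to Θ̃, one has ∫ f_*(x) (f_*(x)/f(x))^{1/2} dx ≤ C. -/

import Mathlib

open MeasureTheory Real

/-- The Gaussian location mixture density with mixing measure `μ` on `ℝ^d`. -/
noncomputable def gaussianMixture {d : ℕ} (μ : Measure (EuclideanSpace ℝ (Fin d)))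
    (x : EuclideanSpace ℝ (Fin d)) : ℝ :=
  (2 * π) ^ (-(d : ℝ) / 2) * ∫ θ, Real.exp (-‖x - θ‖ ^ 2 / 2) ∂μ

/-!
Since `μ(Θ̃) ≥ τ` and `Θ̃` lies in a ball `‖θ‖ ≤ R`, the inequality
`‖x - θ‖² ≤ (3/2)‖x‖² + 3‖θ‖²` gives `f(x) ≥ c exp(-3‖x‖²/4)`, while `f⋆ ≤ (2π)^{-d/2}`.
Hence `f⋆ (f⋆/f)^{1/2} ≲ f⋆(x) exp(3‖x‖²/8)`. Completing the square,
`exp(3‖x‖²/8 - ‖x - θ‖²/2) = exp(3‖θ‖²/2) exp(-‖x - 4θ‖²/8)`, so by Fubini the integral of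
this bound is a multiple of `∫ exp(3‖θ‖²/2) dμ⋆`.
-/

section InnerProductSpace

variable {E : Type*} [NormedAddCommGroup E] [InnerProductSpace ℝ E]

lemma sq_norm_sub_le_three_halves (x θ : E) :
    ‖x - θ‖ ^ 2 ≤ 3 / 2 * ‖x‖ ^ 2 + 3 * ‖θ‖ ^ 2 := by
  have h := sq_nonneg ‖x + (2 : ℝ) • θ‖
  rw [norm_add_sq_real, norm_smul, real_inner_smul_right] at h
  rw [norm_sub_sq_real]
  norm_num at h
  nlinarith

lemma three_eighths_sq_norm_sub_half_sq_norm_sub (x θ : E) :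
    3 / 8 * ‖x‖ ^ 2 - ‖x - θ‖ ^ 2 / 2 = 3 / 2 * ‖θ‖ ^ 2 - 1 / 8 * ‖x - (4 : ℝ) • θ‖ ^ 2 := by
  rw [norm_sub_sq_real, norm_sub_sq_real, norm_smul, real_inner_smul_right]
  norm_num
  ring

end InnerProductSpace

lemma integrable_exp_neg_mul_sq_norm {V : Type*} [NormedAddCommGroup V] [InnerProductSpace ℝ V]
    [FiniteDimensional ℝ V] [MeasurableSpace V] [BorelSpace V] {b : ℝ} (hb : 0 < b) :
    Integrable (fun x : V => exp (-b * ‖x‖ ^ 2)) := by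
  refine (GaussianFourier.integrable_cexp_neg_mul_sq_norm_add (V := V) (b := (b : ℂ))
    (by simpa using hb) 0 0).norm.congr (ae_of_all _ fun x => ?_)
  simp [Complex.norm_exp, ← Complex.ofReal_pow]

lemma integrable_integral_mul_comp_sub {G Θ : Type*} [AddGroup G] [MeasurableSpace G]
    [MeasurableAdd G] [MeasurableSub₂ G] [MeasurableSpace Θ] {μ : Measure G} [SFinite μ]
    [μ.IsAddRightInvariant] {ν : Measure Θ} [SFinite ν]
    {w : Θ → ℝ} {φ : G → ℝ} {T : Θ → G}
    (hw : Integrable w ν) (hφ : Integrable φ μ) (hφm : Measurable φ) (hT : Measurable T) :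
    Integrable (fun x => ∫ θ, w θ * φ (x - T θ) ∂ν) μ := by
  have hprod : Integrable (fun p : G × Θ => w p.2 * φ (p.1 - T p.2)) (μ.prod ν) := by
    have hmeas : AEStronglyMeasurable (fun p : G × Θ => w p.2 * φ (p.1 - T p.2)) (μ.prod ν) :=
      hw.1.comp_snd.mul
        (hφm.comp (measurable_fst.sub (hT.comp measurable_snd))).aestronglyMeasurable
    refine (integrable_prod_iff' hmeas).2
      ⟨ae_of_all _ fun θ => (hφ.comp_sub_right (T θ)).const_mul (w θ), ?_⟩
    simp only [norm_mul, integral_const_mul, integral_sub_right_eq_self (fun x => ‖φ x‖)]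
    exact hw.norm.mul_const _
  exact hprod.integral_prod_left

section GaussianMixture

variable {d : ℕ}

lemma gaussianMixture_nonneg (μ : Measure (EuclideanSpace ℝ (Fin d)))
    (x : EuclideanSpace ℝ (Fin d)) : 0 ≤ gaussianMixture μ x :=
  mul_nonneg (by positivity) (integral_nonneg fun _ => (exp_pos _).le)

lemma gaussianMixture_le (μ : Measure (EuclideanSpace ℝ (Fin d))) [IsProbabilityMeasure μ]
    (x : EuclideanSpace ℝ (Fin d)) : gaussianMixture μ x ≤ (2 * π) ^ (-(d : ℝ) / 2) := by
  refine mul_le_of_le_one_right (by positivity) ?_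
  calc ∫ θ, exp (-‖x - θ‖ ^ 2 / 2) ∂μ ≤ ∫ _, (1 : ℝ) ∂μ :=
        integral_mono_of_nonneg (ae_of_all _ fun _ => (exp_pos _).le) (integrable_const 1)
          (ae_of_all _ fun θ => exp_le_one_iff.2 (by nlinarith [sq_nonneg ‖x - θ‖]))
    _ = 1 := by simp

lemma le_gaussianMixture (μ : Measure (EuclideanSpace ℝ (Fin d))) [IsFiniteMeasure μ]
    {s : Set (EuclideanSpace ℝ (Fin d))} (hs : MeasurableSet s) {R : ℝ}
    (hsR : ∀ θ ∈ s, ‖θ‖ ≤ R) (x : EuclideanSpace ℝ (Fin d)) :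
    (2 * π) ^ (-(d : ℝ) / 2) * μ.real s * exp (-(3 / 2) * R ^ 2) * exp (-(3 / 4) * ‖x‖ ^ 2)
      ≤ gaussianMixture μ x := by
  have hker : Integrable (fun θ => exp (-‖x - θ‖ ^ 2 / 2)) μ :=
    Integrable.of_bound (by fun_prop) 1 (ae_of_all _ fun θ => by
      rw [norm_of_nonneg (exp_pos _).le]
      exact exp_le_one_iff.2 (by nlinarith [sq_nonneg ‖x - θ‖]))
  have hbound : ∀ θ ∈ s,
      exp (-(3 / 2) * R ^ 2) * exp (-(3 / 4) * ‖x‖ ^ 2) ≤ exp (-‖x - θ‖ ^ 2 / 2) := by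
    intro θ hθ
    rw [← exp_add, exp_le_exp]
    have hθR : ‖θ‖ ^ 2 ≤ R ^ 2 := pow_le_pow_left₀ (norm_nonneg θ) (hsR θ hθ) 2
    linarith [sq_norm_sub_le_three_halves x θ]
  calc _ = (2 * π) ^ (-(d : ℝ) / 2)
        * ((exp (-(3 / 2) * R ^ 2) * exp (-(3 / 4) * ‖x‖ ^ 2)) * μ.real s) := by ring
    _ ≤ (2 * π) ^ (-(d : ℝ) / 2) * ∫ θ in s, exp (-‖x - θ‖ ^ 2 / 2) ∂μ := by
        gcongr
        exact setIntegral_ge_of_const_le_real hs (measure_ne_top μ s) hbound hker.integrableOn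
    _ ≤ (2 * π) ^ (-(d : ℝ) / 2) * ∫ θ, exp (-‖x - θ‖ ^ 2 / 2) ∂μ :=
        mul_le_mul_of_nonneg_left
          (setIntegral_le_integral hker (ae_of_all _ fun _ => (exp_pos _).le)) (by positivity)

lemma gaussianMixture_mul_exp (μ : Measure (EuclideanSpace ℝ (Fin d)))
    (x : EuclideanSpace ℝ (Fin d)) :
    gaussianMixture μ x * exp (3 / 8 * ‖x‖ ^ 2) = (2 * π) ^ (-(d : ℝ) / 2)
      * ∫ θ, exp (3 / 2 * ‖θ‖ ^ 2) * exp (-(1 / 8) * ‖x - (4 : ℝ) • θ‖ ^ 2) ∂μ := by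
  rw [gaussianMixture, mul_assoc, ← integral_mul_const]
  congr 1
  refine integral_congr_ae (ae_of_all _ fun θ => ?_)
  simp only [← exp_add]
  congr 1
  linarith [three_eighths_sq_norm_sub_half_sq_norm_sub x θ]

end GaussianMixture

/-- Uniform bound on `∫ f⋆ (f⋆/f)^{1/2}` over Gaussian mixtures `f` whose mixing measure
puts mass at least `τ` on a compact set `Θ̃`, assuming the mixing measure of `f⋆` has an
exponential moment `∫ exp(3‖θ‖²/2) dμ⋆ < ∞`. -/
theorem integral_ratio_sqrt_bound {d : ℕ}
    (Θ : Set (EuclideanSpace ℝ (Fin d))) (hΘ : IsCompact Θ) (τ : ℝ) (hτ : 0 < τ)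
    (μstar : Measure (EuclideanSpace ℝ (Fin d))) [IsProbabilityMeasure μstar]
    (hmom : Integrable (fun θ => Real.exp (3 * ‖θ‖ ^ 2 / 2)) μstar) :
    ∃ C : ℝ, ∀ (μ : Measure (EuclideanSpace ℝ (Fin d))), IsProbabilityMeasure μ →
      ENNReal.ofReal τ ≤ μ Θ →
      ∫ x, gaussianMixture μstar x *
        Real.sqrt (gaussianMixture μstar x / gaussianMixture μ x) ≤ C := by
  obtain ⟨R, hR⟩ := hΘ.isBounded.exists_norm_le
  set A : ℝ := (2 * π) ^ (-(d : ℝ) / 2)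
  set c : ℝ := A * τ * exp (-(3 / 2) * R ^ 2)
  set G : EuclideanSpace ℝ (Fin d) → ℝ := fun x =>
    ∫ θ, exp (3 / 2 * ‖θ‖ ^ 2) * exp (-(1 / 8) * ‖x - (4 : ℝ) • θ‖ ^ 2) ∂μstar
  have hG : Integrable G :=
    integrable_integral_mul_comp_sub (by simpa only [mul_div_right_comm] using hmom)
      (integrable_exp_neg_mul_sq_norm (by norm_num)) (by fun_prop) (by fun_prop)
  refine ⟨sqrt (A / c) * A * ∫ x, G x, fun μ _ hμΘ => ?_⟩
  have hτΘ : τ ≤ μ.real Θ :=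
    (ENNReal.ofReal_le_iff_le_toReal (measure_ne_top μ Θ)).1 hμΘ
  have hlow (x : EuclideanSpace ℝ (Fin d)) : c * exp (-(3 / 4) * ‖x‖ ^ 2) ≤ gaussianMixture μ x :=
    le_trans (by simp only [c, A]; gcongr) (le_gaussianMixture μ hΘ.measurableSet hR x)
  have hpt (x : EuclideanSpace ℝ (Fin d)) : gaussianMixture μstar x *
      sqrt (gaussianMixture μstar x / gaussianMixture μ x) ≤ sqrt (A / c) * A * G x := by
    have hsqrt : sqrt (A / (c * exp (-(3 / 4) * ‖x‖ ^ 2)))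
        = sqrt (A / c) * exp (3 / 8 * ‖x‖ ^ 2) := by
      rw [div_mul_eq_div_div, div_eq_mul_inv (A / c), ← exp_neg, sqrt_mul' _ (exp_pos _).le]
      congr 1
      rw [sqrt_eq_iff_mul_self_eq_of_pos (exp_pos _), ← exp_add]
      ring_nf
    calc _ ≤ gaussianMixture μstar x * sqrt (A / (c * exp (-(3 / 4) * ‖x‖ ^ 2))) := by
          gcongr
          · exact gaussianMixture_nonneg μstar x
          · exact gaussianMixture_le μstar x
          · exact hlow x
      _ = sqrt (A / c) * (gaussianMixture μstar x * exp (3 / 8 * ‖x‖ ^ 2)) := by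
          rw [hsqrt, mul_left_comm]
      _ = sqrt (A / c) * A * G x := by rw [gaussianMixture_mul_exp, mul_assoc]
  rw [← integral_const_mul]
  exact integral_mono_of_nonneg
    (ae_of_all _ fun x => mul_nonneg (gaussianMixture_nonneg μstar x) (sqrt_nonneg _))
    (hG.const_mul _) (ae_of_all _ hpt)
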